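/- arXiv:1111.5922 — 3 statements merged into one kernel-verified Lean document; each statement's English description precedes it below -/
import Mathlib

section
/- Let T : A → B be a separating linear map between semisimple regular commutative Banach algebras. For each y in the set Ω_B' = {y ∈ Ω_B : ∃a ∈ A, (Ta)^(y) ≠ 0}, the support of the functional T^t y (the complement in the one-point compactification of Ω_A of the union of its vanishing open sets) is a single point. -/
/-!
Two distinct points of the support have disjoint neighbourhoods, each carrying an element `a`
with `y (T a) ≠ 0`; by semisimplicity these two elements multiply to zero, so separation makes
`y (T a₁) * y (T a₂) = 0`, a contradiction. If the support were empty, the vanishing sets would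
cover `Ω_A`; by regularity and Gelfand–Mazur, the ideals of elements whose cozero sets lie in the
members of an open cover of `Ω_A` generate `A`, so `y ∘ T` would vanish identically.
-/

open WeakDual Topology Filter

variable {A B : Type*} [NormedCommRing A] [NormedAlgebra ℂ A]
  [NormedCommRing B] [NormedAlgebra ℂ B]

/-- The cozero set of the Gelfand transform of `a`. -/
def gelfCoz (a : A) : Set (characterSpace ℂ A) := {x | x a ≠ 0}

/-- The support of the Gelfand transform of `a`. -/
def gelfSupp (a : A) : Set (characterSpace ℂ A) := closure (gelfCoz a)

/-- `a` has compactly supported Gelfand transform. -/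
def HasCompactGelfandSupport (a : A) : Prop := IsCompact (gelfSupp a)

/-- A commutative Banach algebra is Tauberian if elements with compactly supported
Gelfand transform are dense. -/
def Tauberian (A : Type*) [NormedCommRing A] [NormedAlgebra ℂ A] : Prop :=
  Dense {a : A | HasCompactGelfandSupport a}

/-- Regularity. -/
def Regular (A : Type*) [NormedCommRing A] [NormedAlgebra ℂ A] : Prop :=
  ∀ (x : characterSpace ℂ A) (U : Set (characterSpace ℂ A)), IsOpen U → x ∈ U →
    ∃ a : A, x a = 1 ∧ ∀ y : characterSpace ℂ A, y ∉ U → y a = 0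

/-- Semisimplicity. -/
def Semisimple (A : Type*) [NormedCommRing A] [NormedAlgebra ℂ A] : Prop :=
  ∀ a : A, (∀ x : characterSpace ℂ A, x a = 0) → a = 0

/-- Condition (M). -/
def ConditionM (A : Type*) [NormedCommRing A] [NormedAlgebra ℂ A] : Prop :=
  Regular A ∧
  ∀ (x : characterSpace ℂ A) (a : A), x a = 0 →
    ∀ U ∈ 𝓝 x, ∀ ε > (0:ℝ), ∃ b : A,
      (∃ V ∈ 𝓝 x, ∀ y ∈ V, y b = 1) ∧ gelfSupp b ⊆ U ∧ ‖b * a‖ < ε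

/-- `D`-uniform regularity. -/
def DUniformlyRegular (A : Type*) [NormedCommRing A] [NormedAlgebra ℂ A] (D : ℝ) : Prop :=
  ∀ (x : characterSpace ℂ A) (U : Set (characterSpace ℂ A)), IsOpen U → x ∈ U →
    ∀ ε > (0:ℝ), ∃ a : A, x a = 1 ∧ gelfSupp a ⊆ U ∧ ‖a‖ ≤ D + ε

/-- A linear map is separating (disjointness preserving) if `ab = 0 ⇒ Ta·Tb = 0`. -/
def Separating (T : A →ₗ[ℂ] B) : Prop := ∀ a b : A, a * b = 0 → T a * T b = 0

/-- `Ω_B'`: the characters `y` of `B` with `(Ta)^(y) ≠ 0` for some `a`. -/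
def OmegaB' (T : A →ₗ[ℂ] B) : Set (characterSpace ℂ B) := {y | ∃ a : A, y (T a) ≠ 0}

/-- `V` is a vanishing set for the functional `T^t y` in the one-point
compactification of `Ω_A`. -/
def IsVanishingSet (T : A →ₗ[ℂ] B) (y : characterSpace ℂ B)
    (V : Set (OnePoint (characterSpace ℂ A))) : Prop :=
  IsOpen V ∧ ∀ a : A, ((fun x : characterSpace ℂ A => (x : OnePoint (characterSpace ℂ A)))
      '' gelfCoz a ⊆ V) → y (T a) = 0

/-- The support of the functional `T^t y`: the complement of the union of its
vanishing open sets. -/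
def suppFunctional (T : A →ₗ[ℂ] B) (y : characterSpace ℂ B) :
    Set (OnePoint (characterSpace ℂ A)) :=
  {z | ∀ V : Set (OnePoint (characterSpace ℂ A)), IsVanishingSet T y V → z ∉ V}

def cozeroIdeal (U : Set (characterSpace ℂ A)) : Ideal A where
  carrier := {a | gelfCoz a ⊆ U}
  add_mem' {a b} ha hb x hx := by
    by_contra hxU
    have hxa : x a = 0 := not_not.1 fun h => hxU (ha h)
    have hxb : x b = 0 := not_not.1 fun h => hxU (hb h)
    exact hx (by rw [map_add, hxa, hxb, add_zero])
  zero_mem' x hx := absurd (map_zero x) hx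
  smul_mem' c a ha x (hx : x (c * a) ≠ 0) := ha (right_ne_zero_of_mul (by rwa [map_mul] at hx))

@[simp]
theorem mem_cozeroIdeal {U : Set (characterSpace ℂ A)} {a : A} :
    a ∈ cozeroIdeal U ↔ gelfCoz a ⊆ U :=
  Iff.rfl

theorem Regular.iSup_cozeroIdeal_eq_top [CompleteSpace A] (hreg : Regular A) {ι : Type*}
    {U : ι → Set (characterSpace ℂ A)} (hU : ∀ i, IsOpen (U i)) (hcover : ∀ x, ∃ i, x ∈ U i) :
    ⨆ i, cozeroIdeal (U i) = ⊤ := by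
  by_contra hne
  obtain ⟨M, hM, hle⟩ := Ideal.exists_le_maximal _ hne
  obtain ⟨i, hi⟩ := hcover M.toCharacterSpace
  obtain ⟨a, ha1, ha0⟩ := hreg _ _ (hU i) hi
  have ha : a ∈ cozeroIdeal (U i) :=
    mem_cozeroIdeal.2 fun x hx => by_contra fun hxU => hx (ha0 x hxU)
  have hMa := M.toCharacterSpace_apply_eq_zero_of_mem (hle (Ideal.mem_iSup_of_mem i ha))
  exact one_ne_zero (ha1.symm.trans hMa)

theorem Semisimple.mul_eq_zero_of_disjoint_gelfCoz (hsemi : Semisimple A) {a b : A}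
    (hab : Disjoint (gelfCoz a) (gelfCoz b)) : a * b = 0 :=
  hsemi _ fun x => by
    rw [map_mul, mul_eq_zero]
    by_contra! hx
    exact Set.disjoint_left.1 hab hx.1 hx.2

section Support

variable {T : A →ₗ[ℂ] B} {y : characterSpace ℂ B}

theorem exists_apply_ne_zero_of_mem_suppFunctional {z : OnePoint (characterSpace ℂ A)}
    (hz : z ∈ suppFunctional T y) {U : Set (OnePoint (characterSpace ℂ A))} (hU : IsOpen U)
    (hzU : z ∈ U) : ∃ a : A, gelfCoz a ⊆ (↑) ⁻¹' U ∧ y (T a) ≠ 0 := by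
  by_contra! h
  exact hz U ⟨hU, fun a ha => h a (Set.image_subset_iff.1 ha)⟩ hzU

theorem suppFunctional_subsingleton [CompleteSpace A] (hsemi : Semisimple A) (hT : Separating T) :
    (suppFunctional T y).Subsingleton := by
  intro z₁ hz₁ z₂ hz₂
  by_contra hne
  -- `Ω_A` is compact, so its one-point compactification is Hausdorff.
  obtain ⟨U₁, U₂, hU₁, hU₂, hzU₁, hzU₂, hU⟩ := t2_separation hne
  obtain ⟨a₁, ha₁U, ha₁⟩ := exists_apply_ne_zero_of_mem_suppFunctional hz₁ hU₁ hzU₁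
  obtain ⟨a₂, ha₂U, ha₂⟩ := exists_apply_ne_zero_of_mem_suppFunctional hz₂ hU₂ hzU₂
  have hmul : a₁ * a₂ = 0 :=
    hsemi.mul_eq_zero_of_disjoint_gelfCoz ((hU.preimage _).mono ha₁U ha₂U)
  have : y (T a₁) * y (T a₂) = 0 := by rw [← map_mul, hT a₁ a₂ hmul, map_zero]
  exact mul_ne_zero ha₁ ha₂ this

theorem apply_eq_zero_of_forall_mem_isVanishingSet [CompleteSpace A] (hreg : Regular A)
    {ι : Type*} {V : ι → Set (OnePoint (characterSpace ℂ A))}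
    (hV : ∀ i, IsVanishingSet T y (V i)) (hcover : ∀ x : characterSpace ℂ A, ∃ i, ↑x ∈ V i)
    (a : A) : y (T a) = 0 := by
  have ha : a ∈ ⨆ i, cozeroIdeal ((↑) ⁻¹' V i) := by
    rw [hreg.iSup_cozeroIdeal_eq_top (fun i => (hV i).1.preimage OnePoint.continuous_coe)
      hcover]
    exact Submodule.mem_top
  refine Submodule.iSup_induction _ (motive := fun a => y (T a) = 0) ha ?_ ?_ ?_
  · exact fun i b hb => (hV i).2 b (Set.image_subset_iff.2 (mem_cozeroIdeal.1 hb))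
  · rw [map_zero, map_zero]
  · intro b c hb hc
    rw [map_add, map_add, hb, hc, add_zero]

theorem suppFunctional_nonempty [CompleteSpace A] (hreg : Regular A) (hy : y ∈ OmegaB' T) :
    (suppFunctional T y).Nonempty := by
  by_contra hempty
  have hcover (x : characterSpace ℂ A) : ∃ V, IsVanishingSet T y V ∧ ↑x ∈ V := by
    by_contra! h
    exact hempty ⟨x, fun V hV => h V hV⟩
  choose V hV hxV using hcover
  obtain ⟨a, ha⟩ := hy
  exact ha (apply_eq_zero_of_forall_mem_isVanishingSet hreg hV (fun x => ⟨x, hxV x⟩) a)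

end Support

theorem support_of_separating_functional_singleton_general
    [CompleteSpace A]
    (hsemiA : Semisimple A) (hregA : Regular A)
    (T : A →ₗ[ℂ] B) (hT : Separating T) :
    ∀ y ∈ OmegaB' T, ∃ z : OnePoint (characterSpace ℂ A), suppFunctional T y = {z} := by
  intro y hy
  obtain ⟨z, hz⟩ := suppFunctional_nonempty hregA hy
  exact ⟨z, (suppFunctional_subsingleton hsemiA hT).eq_singleton_of_mem hz⟩

/-- for a separating map `T` between semisimple regular commutative Banach
algebras, the support of `T^t y` is a singleton for every `y ∈ Ω_B'`. -/
theorem support_of_separating_functional_singleton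
    [CompleteSpace A] [CompleteSpace B]
    (hsemiA : Semisimple A) (hregA : Regular A) (hsemiB : Semisimple B) (hregB : Regular B)
    (T : A →ₗ[ℂ] B) (hT : Separating T) :
    ∀ y ∈ OmegaB' T, ∃ z : OnePoint (characterSpace ℂ A), suppFunctional T y = {z} :=
  support_of_separating_functional_singleton_general hsemiA hregA T hT
end

section
/- Let T be a bijective separating map from a Tauberian algebra A satisfying condition (M) onto a D-uniformly regular commutative Banach algebra B. Then the function X on Ω_B (with (Ta)^(y) = X(y)·â(t(y))) is bounded away from zero: there is r > 0 with |X(y)| ≥ r for all y ∈ Ω_B. -/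
open WeakDual Topology Filter

variable {A B : Type*} [NormedCommRing A] [NormedAlgebra ℂ A]
  [NormedCommRing B] [NormedAlgebra ℂ B]

/-!
By the open mapping theorem every `b ∈ B` is `T a` with `‖a‖ ≤ C ‖b‖`, and uniform regularity
gives at each `y` some `b` with `b̂(y) = 1` and `‖b‖ ≤ D + 1`. Then `1 = X(y) â(t y)`, while
`|â(t y)| ≤ ‖a‖ ‖1‖ ≤ C (D + 1) ‖1‖` is a bound independent of `y`.
-/

theorem DUniformlyRegular.exists_apply_eq_one_norm_le {D : ℝ} (h : DUniformlyRegular B D)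
    (y : characterSpace ℂ B) : ∃ b : B, y b = 1 ∧ ‖b‖ ≤ D + 1 :=
  let ⟨b, hb, _, hbD⟩ := h y Set.univ isOpen_univ (Set.mem_univ y) 1 one_pos
  ⟨b, hb, hbD⟩

theorem DUniformlyRegular.exists_bound_preimage_apply_eq_one [CompleteSpace A] [CompleteSpace B]
    {D : ℝ} (h : DUniformlyRegular B D) (T : A →L[ℂ] B) (hT : Function.Surjective T) :
    ∃ C : ℝ, ∀ y : characterSpace ℂ B, ∃ a : A, y (T a) = 1 ∧ ‖a‖ ≤ C := by
  obtain ⟨K, hK0, hK⟩ := T.exists_preimage_norm_le hT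
  refine ⟨K * (D + 1), fun y => ?_⟩
  obtain ⟨b, hb, hbD⟩ := h.exists_apply_eq_one_norm_le y
  obtain ⟨a, rfl, ha⟩ := hK b
  exact ⟨a, hb, ha.trans (by gcongr)⟩

theorem exists_pos_le_norm_of_mul_apply_eq_one [CompleteSpace A] {ι : Type*}
    (φ : ι → characterSpace ℂ A) (X : ι → ℂ) (C : ℝ) (h : ∀ i, ∃ a : A, X i * φ i a = 1 ∧ ‖a‖ ≤ C) :
    ∃ r > (0 : ℝ), ∀ i, r ≤ ‖X i‖ := by
  refine ⟨(|C| * ‖(1 : A)‖ + 1)⁻¹, by positivity, fun i => ?_⟩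
  obtain ⟨a, ha, haC⟩ := h i
  have hφa : ‖φ i a‖ ≤ |C| * ‖(1 : A)‖ :=
    calc ‖φ i a‖ ≤ ‖a‖ * ‖(1 : A)‖ := AlgHom.norm_apply_le_self_mul_norm_one (φ i) a
      _ ≤ |C| * ‖(1 : A)‖ := by gcongr; exact haC.trans (le_abs_self C)
  rw [inv_le_iff_one_le_mul₀ (by positivity)]
  calc (1 : ℝ) = ‖X i‖ * ‖φ i a‖ := by rw [← norm_mul, ha, norm_one]
    _ ≤ ‖X i‖ * (|C| * ‖(1 : A)‖ + 1) := by gcongr; linarith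

theorem weight_function_bounded_below_general
    [CompleteSpace A] [CompleteSpace B]
    (D : ℝ) (hregB : DUniformlyRegular B D)
    (T : A →ₗ[ℂ] B) (hbij : Function.Bijective T)
    (hcont : Continuous T)
    (t : characterSpace ℂ B → characterSpace ℂ A)
    (X : characterSpace ℂ B → ℂ)
    (heq : ∀ (a : A) (y : characterSpace ℂ B), y (T a) = X y * (t y) a) :
    ∃ r > (0:ℝ), ∀ y : characterSpace ℂ B, r ≤ ‖X y‖ := by
  obtain ⟨C, hC⟩ := hregB.exists_bound_preimage_apply_eq_one ⟨T, hcont⟩ hbij.2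
  refine exists_pos_le_norm_of_mul_apply_eq_one t X C fun y => ?_
  obtain ⟨a, ha, haC⟩ := hC y
  exact ⟨a, (heq a y).symm.trans ha, haC⟩

/-- for a bijective separating map `T` from a Tauberian algebra satisfying
condition (M) onto a `D`-uniformly regular algebra `B`, the weight function `X` is bounded
away from zero. -/
theorem weight_function_bounded_below
    [CompleteSpace A] [CompleteSpace B]
    (htaub : Tauberian A) (hM : ConditionM A)
    (D : ℝ) (hD : 0 < D) (hregB : DUniformlyRegular B D)
    (T : A →ₗ[ℂ] B) (hT : Separating T) (hbij : Function.Bijective T)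
    (hcont : Continuous T)
    (t : characterSpace ℂ B → characterSpace ℂ A) (htinj : Function.Injective t)
    (X : characterSpace ℂ B → ℂ) (hXcont : Continuous X) (hXne : ∀ y, X y ≠ 0)
    (heq : ∀ (a : A) (y : characterSpace ℂ B), y (T a) = X y * (t y) a) :
    ∃ r > (0:ℝ), ∀ y : characterSpace ℂ B, r ≤ ‖X y‖ :=
  weight_function_bounded_below_general D hregB T hbij hcont t X heq
end

section
/- Let A and B be commutative semisimple regular Tauberian Banach algebras with 1-bounded approximate identities, and suppose T : A → B is a bounded bijection such that (Ta)^(y) = X(y)·â(t(y)) for all a ∈ A, y ∈ Ω_B, where t : Ω_B → Ω_A is a homeomorphism and X is continuous. Then X satisfies the BSE-condition: there is C > 0 such that for all y₁,…,y_n ∈ Ω_B and α₁,…,α_n ∈ ℂ, |Σ α_i X(y_i)| ≤ C‖Σ α_i y_i‖_{B*}, with C = ‖T‖. -/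
/-!
Test the functional `φ = ∑ αᵢ yᵢ` on `T eⱼ`, where `(eⱼ)` is a `1`-bounded approximate identity
of `A`. Then `‖φ (T eⱼ)‖ ≤ ‖T‖ ‖φ‖`, while the weighted-composition form of `T` gives
`φ (T eⱼ) = ∑ αᵢ X(yᵢ) êⱼ(t yᵢ)`, which tends to `∑ αᵢ X(yᵢ)` because `êⱼ → 1` pointwise on `Ω_A`.
-/
open WeakDual Topology Filter

variable {A B : Type*} [NormedCommRing A] [NormedAlgebra ℂ A]
  [NormedCommRing B] [NormedAlgebra ℂ B]

/-- An approximate identity bounded in norm by `D`. -/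
def BddApproxId (A : Type*) [NormedCommRing A] [NormedAlgebra ℂ A] (D : ℝ) : Prop :=
  ∃ (ι : Type) (l : Filter ι) (_ : l.NeBot) (e : ι → A),
    (∀ i, ‖e i‖ ≤ D) ∧ ∀ a : A, Tendsto (fun i => a * e i) l (𝓝 a)

theorem WeakDual.CharacterSpace.tendsto_apply_one_of_approxId {𝕜 R ι : Type*} [Field 𝕜]
    [TopologicalSpace 𝕜] [IsTopologicalRing 𝕜] [NonUnitalNonAssocSemiring R]
    [TopologicalSpace R] [Module 𝕜 R] {l : Filter ι} {e : ι → R}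
    (he : ∀ a, Tendsto (fun i => a * e i) l (𝓝 a)) (x : characterSpace 𝕜 R) :
    Tendsto (fun i => x (e i)) l (𝓝 1) := by
  obtain ⟨a, hxa⟩ : ∃ a, x a ≠ 0 := by
    by_contra! h
    exact x.prop.1 (ContinuousLinearMap.ext h)
  have hlim : Tendsto (fun i => (x a)⁻¹ * x (a * e i)) l (𝓝 ((x a)⁻¹ * x a)) :=
    ((map_continuous x).tendsto a |>.comp (he a)).const_mul _
  simpa [map_mul, inv_mul_cancel_left₀ hxa, inv_mul_cancel₀ hxa] using hlim

theorem sum_smul_toStrongDual_apply_of_weighted_comp {κ : Type*} {T : A → B}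
    {t : characterSpace ℂ B → characterSpace ℂ A} {X : characterSpace ℂ B → ℂ}
    (heq : ∀ (a : A) (y : characterSpace ℂ B), y (T a) = X y * (t y) a) (s : Finset κ)
    (y : κ → characterSpace ℂ B) (α : κ → ℂ) (a : A) :
    (∑ i ∈ s, α i • toStrongDual (y i : WeakDual ℂ B)) (T a) =
      ∑ i ∈ s, α i * X (y i) * t (y i) a := by
  simp only [sum_apply, smul_apply, smul_eq_mul, mul_assoc]
  exact Finset.sum_congr rfl fun i _ => congrArg (α i * ·) (heq a (y i))

theorem weight_satisfies_BSE_condition_general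
    (haiA : BddApproxId A 1)
    (T : A →L[ℂ] B)
    (t : characterSpace ℂ B ≃ₜ characterSpace ℂ A)
    (X : characterSpace ℂ B → ℂ)
    (heq : ∀ (a : A) (y : characterSpace ℂ B), y (T a) = X y * (t y) a) :
    ∀ (n : ℕ) (y : Fin n → characterSpace ℂ B) (α : Fin n → ℂ),
      ‖∑ i, α i * X (y i)‖ ≤
        ‖T‖ * ‖∑ i, α i • WeakDual.toStrongDual ((y i : WeakDual ℂ B))‖ := by
  obtain ⟨ι, l, _, e, he_norm, he⟩ := haiA
  intro n y α
  set φ := ∑ i, α i • toStrongDual (y i : WeakDual ℂ B)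
  have hlim : Tendsto (fun j => φ (T (e j))) l (𝓝 (∑ i, α i * X (y i))) := by
    simp only [φ, sum_smul_toStrongDual_apply_of_weighted_comp heq]
    simpa using tendsto_finsetSum _ fun i _ =>
      (CharacterSpace.tendsto_apply_one_of_approxId he (t (y i))).const_mul (α i * X (y i))
  refine le_of_tendsto hlim.norm (Eventually.of_forall fun j => ?_)
  calc ‖(φ.comp T) (e j)‖ ≤ ‖φ.comp T‖ * 1 :=
        ContinuousLinearMap.le_opNorm_of_le _ (he_norm j)
    _ ≤ ‖T‖ * ‖φ‖ := by
        rw [mul_one, mul_comm]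
        exact ContinuousLinearMap.opNorm_comp_le _ _

/-- for a bounded bijection `T` with `(Ta)^(y) = X(y)·â(t(y))` between
semisimple regular Tauberian algebras with `1`-bounded approximate identities, the weight
`X` satisfies the BSE-condition with constant `C = ‖T‖`. -/
theorem weight_satisfies_BSE_condition
    [CompleteSpace A] [CompleteSpace B]
    (hsemiA : Semisimple A) (hregA : Regular A) (htaubA : Tauberian A)
    (hsemiB : Semisimple B) (hregB : Regular B) (htaubB : Tauberian B)
    (haiA : BddApproxId A 1) (haiB : BddApproxId B 1)
    (T : A →L[ℂ] B) (hbij : Function.Bijective T)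
    (t : characterSpace ℂ B ≃ₜ characterSpace ℂ A)
    (X : characterSpace ℂ B → ℂ) (hXcont : Continuous X)
    (heq : ∀ (a : A) (y : characterSpace ℂ B), y (T a) = X y * (t y) a) :
    ∀ (n : ℕ) (y : Fin n → characterSpace ℂ B) (α : Fin n → ℂ),
      ‖∑ i, α i * X (y i)‖ ≤
        ‖T‖ * ‖∑ i, α i • WeakDual.toStrongDual ((y i : WeakDual ℂ B))‖ :=
  weight_satisfies_BSE_condition_general haiA T t X heq
end
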